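/- arXiv:2005.10320 — 3 statements merged into one kernel-verified Lean document; each statement's English description precedes it below -/
import Mathlib

section
/- For fixed m ≥ 2, Σ_{k₁+⋯+k_m = n, k_i ≥ 1} 1/√(k₁ k₂ ⋯ k_m) = n^{m/2 − 1} · (Γ(1/2)^m / Γ(m/2)) · (1 + O(1/√n)). -/
open Finset Real MeasureTheory

namespace CompAsymp

noncomputable def S (m n : ℕ) : ℝ :=
  ∑ k ∈ (Finset.Nat.antidiagonalTuple m n).filter (fun k => ∀ i, 1 ≤ k i),
      1 / Real.sqrt (∏ i, (k i : ℝ))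

lemma one_div_sqrt_eq {x : ℝ} (hx : 0 ≤ x) : 1 / Real.sqrt x = x ^ (-(1/2 : ℝ)) := by
  rw [Real.rpow_neg hx, ← Real.sqrt_eq_rpow, one_div]

lemma S_one {n : ℕ} (hn : 1 ≤ n) : S 1 n = 1 / Real.sqrt n := by
  rw [S, Finset.Nat.antidiagonalTuple_one]
  rw [Finset.filter_singleton]
  simp only [Matrix.cons_val_fin_one, if_pos (fun i => hn)]
  simp

lemma S_succ (m n : ℕ) (hm : 1 ≤ m) :
    S (m+1) n = ∑ a ∈ Icc 1 (n-1), (1 / Real.sqrt a) * S m (n-a) := by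
  classical
  simp only [S, Finset.mul_sum]
  have key := Finset.sum_sigma (Finset.Icc 1 (n-1))
    (fun a => (Finset.Nat.antidiagonalTuple m (n-a)).filter fun k => ∀ i, 1 ≤ k i)
    (fun p : Σ _ : ℕ, (Fin m → ℕ) => 1 / Real.sqrt (p.1 : ℝ) * (1 / Real.sqrt (∏ i, (p.2 i : ℝ))))
  rw [← key]
  refine (Finset.sum_bij' (fun (k : Fin (m+1) → ℕ) (hk : k ∈ _) => (⟨k 0, Fin.tail k⟩ : Σ _ : ℕ, (Fin m → ℕ)))
      (fun p _ => Fin.cons p.1 p.2) ?_ ?_ ?_ ?_ ?_)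
  · -- hi : forward membership
    intro k hk
    simp only [Finset.mem_filter, Finset.Nat.mem_antidiagonalTuple] at hk
    obtain ⟨hsum, hpos⟩ := hk
    have hsum' : k 0 + ∑ i : Fin m, Fin.tail k i = n := by
      rw [← hsum, Fin.sum_univ_succ]; rfl
    have htail_ge : 1 ≤ ∑ i : Fin m, Fin.tail k i := by
      have : ∀ i : Fin m, 1 ≤ Fin.tail k i := fun i => hpos _
      calc 1 ≤ m := hm
        _ = ∑ i : Fin m, 1 := by simp
        _ ≤ _ := Finset.sum_le_sum fun i _ => this i
    simp only [Finset.mem_sigma, Finset.mem_Icc, Finset.mem_filter,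
      Finset.Nat.mem_antidiagonalTuple]
    refine ⟨⟨hpos 0, by omega⟩, by omega, fun i => hpos _⟩
  · -- hj : backward membership
    rintro ⟨a, t⟩ hp
    simp only [Finset.mem_sigma, Finset.mem_Icc, Finset.mem_filter,
      Finset.Nat.mem_antidiagonalTuple] at hp
    obtain ⟨⟨ha1, ha2⟩, hsum, hpos⟩ := hp
    simp only [Finset.mem_filter, Finset.Nat.mem_antidiagonalTuple]
    constructor
    · rw [Fin.sum_univ_succ]
      simp only [Fin.cons_zero, Fin.cons_succ]
      omega
    · intro i
      refine Fin.cases ?_ ?_ i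
      · simpa using ha1
      · intro j; simpa using hpos j
  · intro k hk
    exact Fin.cons_self_tail k
  · rintro ⟨a, t⟩ hp
    simp [Fin.tail_cons]
  · intro k hk
    simp only [Finset.mem_filter, Finset.Nat.mem_antidiagonalTuple] at hk
    rw [Fin.prod_univ_succ]
    push_cast
    rw [Real.sqrt_mul (by positivity)]
    rw [one_div_mul_one_div]
    rfl

lemma sum_one_div_sqrt_le (N : ℕ) : ∑ a ∈ Finset.Icc 1 N, 1 / Real.sqrt a ≤ 2 * Real.sqrt N := by
  induction N with
  | zero => simp
  | succ N ih =>
    rw [Finset.sum_Icc_succ_top (by omega : 1 ≤ N + 1)]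
    have hs : Real.sqrt N ^ 2 = N := Real.sq_sqrt (by positivity)
    have ht : Real.sqrt (N+1) ^ 2 = (N:ℝ)+1 := by
      rw [Real.sq_sqrt (by positivity)]
    have ht0 : 0 < Real.sqrt ((N:ℕ)+1 : ℕ) := by
      apply Real.sqrt_pos.2; positivity
    have hcast : ((N+1 : ℕ) : ℝ) = (N:ℝ)+1 := by push_cast; ring
    rw [hcast] at ht0 ⊢
    have hstep : 1 / Real.sqrt ((N:ℝ)+1) ≤ 2 * Real.sqrt ((N:ℝ)+1) - 2 * Real.sqrt N := by
      rw [div_le_iff₀ ht0]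
      have h2 : Real.sqrt N * Real.sqrt ((N:ℝ)+1) ≤ (N:ℝ) + 1/2 := by
        nlinarith [Real.sqrt_nonneg (N:ℝ), Real.sqrt_nonneg ((N:ℝ)+1),
          sq_nonneg (Real.sqrt ((N:ℝ)+1) - Real.sqrt N)]
      nlinarith
    linarith
lemma sum_rpow_le {γ : ℝ} (hγ : -(1/2) ≤ γ) (n : ℕ) (hn : 1 ≤ n) :
    ∑ j ∈ Finset.Icc 1 n, (j:ℝ) ^ γ ≤ 2 * (n:ℝ) ^ (γ + 1) := by
  have hn0 : (0:ℝ) < n := by positivity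
  have key : ∀ j ∈ Finset.Icc 1 n, (j:ℝ) ^ γ ≤ (n:ℝ) ^ (γ + 1/2) * (1 / Real.sqrt j) := by
    intro j hj
    simp only [Finset.mem_Icc] at hj
    have hj0 : (0:ℝ) < j := by exact_mod_cast Nat.lt_of_lt_of_le Nat.zero_lt_one hj.1
    have : (j:ℝ) ^ γ = (j:ℝ) ^ (γ + 1/2) * (j:ℝ) ^ (-(1/2:ℝ)) := by
      rw [← Real.rpow_add hj0]; ring_nf
    rw [this, ← one_div_sqrt_eq hj0.le]
    exact mul_le_mul_of_nonneg_right
      (Real.rpow_le_rpow hj0.le (by exact_mod_cast hj.2) (by linarith)) (by positivity)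
  calc ∑ j ∈ Finset.Icc 1 n, (j:ℝ) ^ γ
      ≤ ∑ j ∈ Finset.Icc 1 n, (n:ℝ) ^ (γ + 1/2) * (1 / Real.sqrt j) :=
        Finset.sum_le_sum key
    _ = (n:ℝ) ^ (γ + 1/2) * ∑ j ∈ Finset.Icc 1 n, (1 / Real.sqrt j) := by
        rw [Finset.mul_sum]
    _ ≤ (n:ℝ) ^ (γ + 1/2) * (2 * Real.sqrt n) := by
        have := sum_one_div_sqrt_le n
        exact mul_le_mul_of_nonneg_left this (Real.rpow_nonneg hn0.le _)
    _ = 2 * (n:ℝ) ^ (γ + 1) := by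
        rw [Real.sqrt_eq_rpow, ← mul_assoc, mul_comm ((n:ℝ) ^ (γ + 1/2)) 2, mul_assoc,
          ← Real.rpow_add hn0]
        ring_nf

lemma sum_reflect' (n p q : ℕ) (hq : q ≤ n) (hp : p ≤ n) (f : ℕ → ℝ) :
    ∑ a ∈ Finset.Icc p q, f (n - a) = ∑ a ∈ Finset.Icc (n - q) (n - p), f a := by
  refine Finset.sum_bij' (fun a _ => n - a) (fun b _ => n - b) ?_ ?_ ?_ ?_ ?_
  · intro a ha; simp only [Finset.mem_Icc] at ha ⊢; omega
  · intro b hb; simp only [Finset.mem_Icc] at hb ⊢; omega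
  · intro a ha; simp only [Finset.mem_Icc] at ha; beta_reduce; omega
  · intro b hb; simp only [Finset.mem_Icc] at hb; beta_reduce; omega
  · intro a ha; rfl

lemma conv_bound {γ : ℝ} (hγ : -(1/2) ≤ γ) (n : ℕ) (hn : 1 ≤ n) :
    ∑ a ∈ Finset.Icc 1 (n-1), (1 / Real.sqrt a) * ((n - a : ℕ) : ℝ) ^ γ
      ≤ 8 * (n:ℝ) ^ (γ + 1/2) := by
  have hn0 : (0:ℝ) < n := by exact_mod_cast hn
  have key : ∀ a ∈ Finset.Icc 1 (n-1), (1 / Real.sqrt a) * ((n - a : ℕ) : ℝ) ^ γ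
      ≤ 2 * (n:ℝ)^γ * (1 / Real.sqrt a) + (2 / Real.sqrt n) * ((n - a : ℕ) : ℝ) ^ γ := by
    intro a ha
    simp only [Finset.mem_Icc] at ha
    have hA1 : (1:ℝ) ≤ (a:ℝ) := by exact_mod_cast ha.1
    have hA0 : (0:ℝ) < (a:ℝ) := by linarith
    have han : a ≤ n - 1 := ha.2
    have hcast : ((n - a : ℕ) : ℝ) = (n:ℝ) - (a:ℝ) := by
      have : a ≤ n := by omega
      push_cast [this]; ring
    have hna1 : (1:ℝ) ≤ ((n - a : ℕ) : ℝ) := by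
      have : 1 ≤ n - a := by omega
      exact_mod_cast this
    have hna0 : (0:ℝ) < ((n - a : ℕ) : ℝ) := by linarith
    rcases le_or_gt (2 * (a:ℝ)) (n:ℝ) with hcase | hcase
    · -- a small: (n-a)^γ ≤ 2 n^γ
      have hhalf : (n:ℝ)/2 ≤ ((n - a : ℕ) : ℝ) := by rw [hcast]; linarith
      have hbound : ((n - a : ℕ) : ℝ) ^ γ ≤ 2 * (n:ℝ)^γ := by
        rcases le_or_gt 0 γ with hγ0 | hγ0
        · have h1 : ((n - a : ℕ) : ℝ) ^ γ ≤ (n:ℝ)^γ := by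
            apply Real.rpow_le_rpow hna0.le _ hγ0
            rw [hcast]; linarith
          have h2 : (0:ℝ) ≤ (n:ℝ)^γ := Real.rpow_nonneg hn0.le _
          linarith
        · have h1 : ((n - a : ℕ) : ℝ) ^ γ ≤ ((n:ℝ)/2) ^ γ :=
            Real.rpow_le_rpow_of_nonpos (by linarith) hhalf hγ0.le
          have h2 : ((n:ℝ)/2) ^ γ = (n:ℝ)^γ * ((2:ℝ)^γ)⁻¹ := by
            rw [Real.div_rpow hn0.le (by norm_num)]; ring
          have h3 : ((2:ℝ)^γ)⁻¹ = (2:ℝ)^(-γ) := (Real.rpow_neg (by norm_num) γ).symm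
          have h4 : (2:ℝ)^(-γ) ≤ 2 := by
            calc (2:ℝ)^(-γ) ≤ (2:ℝ)^(1:ℝ) :=
                  Real.rpow_le_rpow_of_exponent_le one_le_two (by linarith)
              _ = 2 := Real.rpow_one 2
          have h5 : (0:ℝ) ≤ (n:ℝ)^γ := Real.rpow_nonneg hn0.le _
          calc ((n - a : ℕ) : ℝ) ^ γ ≤ ((n:ℝ)/2) ^ γ := h1
            _ = (n:ℝ)^γ * (2:ℝ)^(-γ) := by rw [h2, h3]
            _ ≤ (n:ℝ)^γ * 2 := mul_le_mul_of_nonneg_left h4 h5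
            _ = 2 * (n:ℝ)^γ := by ring
      have hs : 0 ≤ 1 / Real.sqrt a := by positivity
      have ht2 : 0 ≤ (2 / Real.sqrt n) * ((n - a : ℕ) : ℝ) ^ γ := by positivity
      calc (1 / Real.sqrt a) * ((n - a : ℕ) : ℝ) ^ γ ≤ (1 / Real.sqrt a) * (2 * (n:ℝ)^γ) :=
            mul_le_mul_of_nonneg_left hbound hs
        _ = 2 * (n:ℝ)^γ * (1 / Real.sqrt a) := by ring
        _ ≤ _ := by linarith
    · -- a large: 1/√a ≤ 2/√n
      have hsa : Real.sqrt n ≤ 2 * Real.sqrt a := by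
        have h1 : Real.sqrt n ≤ Real.sqrt (2 * a) := Real.sqrt_le_sqrt (by linarith)
        have h2 : Real.sqrt (2 * (a:ℝ)) = Real.sqrt 2 * Real.sqrt a :=
          Real.sqrt_mul (by norm_num) _
        have h3 : Real.sqrt 2 ≤ 2 := by
          nlinarith [Real.sq_sqrt (by norm_num : (0:ℝ) ≤ 2), Real.sqrt_nonneg 2]
        nlinarith [Real.sqrt_nonneg (a:ℝ)]
      have hsqa : 0 < Real.sqrt a := Real.sqrt_pos.2 hA0
      have hsqn : 0 < Real.sqrt n := Real.sqrt_pos.2 hn0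
      have hfrac : 1 / Real.sqrt a ≤ 2 / Real.sqrt n := by
        rw [div_le_div_iff₀ hsqa hsqn]; linarith
      have hpow : 0 ≤ ((n - a : ℕ) : ℝ) ^ γ := Real.rpow_nonneg hna0.le _
      have ht1 : 0 ≤ 2 * (n:ℝ)^γ * (1 / Real.sqrt a) := by positivity
      calc (1 / Real.sqrt a) * ((n - a : ℕ) : ℝ) ^ γ ≤ (2 / Real.sqrt n) * ((n - a : ℕ) : ℝ) ^ γ :=
            mul_le_mul_of_nonneg_right hfrac hpow
        _ ≤ _ := by linarith
  have hsqn : 0 < Real.sqrt n := Real.sqrt_pos.2 hn0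
  have e1 : (n:ℝ)^γ * Real.sqrt n = (n:ℝ)^(γ + 1/2) := by
    rw [Real.sqrt_eq_rpow, ← Real.rpow_add hn0]
  have e2 : (n:ℝ)^(γ + 1) / Real.sqrt n = (n:ℝ)^(γ + 1/2) := by
    rw [Real.sqrt_eq_rpow, ← Real.rpow_sub hn0]; ring_nf
  have s1 : ∑ a ∈ Finset.Icc 1 (n-1), 1 / Real.sqrt a ≤ 2 * Real.sqrt n := by
    calc ∑ a ∈ Finset.Icc 1 (n-1), 1 / Real.sqrt a ≤ 2 * Real.sqrt (n-1 : ℕ) :=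
          sum_one_div_sqrt_le (n-1)
      _ ≤ 2 * Real.sqrt n := by
          have : ((n-1 : ℕ):ℝ) ≤ (n:ℝ) := by
            have : (n:ℕ) - 1 ≤ n := by omega
            exact_mod_cast this
          nlinarith [Real.sqrt_le_sqrt this]
  have s2 : ∑ a ∈ Finset.Icc 1 (n-1), ((n - a : ℕ) : ℝ) ^ γ ≤ 2 * (n:ℝ)^(γ+1) := by
    have hr := sum_reflect' n 1 (n-1) (by omega) (by omega) (fun j => (j:ℝ)^γ)
    have hend : n - (n-1) = 1 := by omega
    rw [hend] at hr
    calc ∑ a ∈ Finset.Icc 1 (n-1), ((n - a : ℕ) : ℝ) ^ γ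
        = ∑ a ∈ Finset.Icc 1 (n-1), ((a : ℕ) : ℝ) ^ γ := hr
      _ ≤ ∑ a ∈ Finset.Icc 1 n, ((a : ℕ) : ℝ) ^ γ := by
          apply Finset.sum_le_sum_of_subset_of_nonneg
          · apply Finset.Icc_subset_Icc_right; omega
          · intro i _ _; positivity
      _ ≤ 2 * (n:ℝ)^(γ+1) := sum_rpow_le hγ n hn
  calc ∑ a ∈ Finset.Icc 1 (n-1), (1 / Real.sqrt a) * ((n - a : ℕ) : ℝ) ^ γ
      ≤ ∑ a ∈ Finset.Icc 1 (n-1),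
          (2 * (n:ℝ)^γ * (1 / Real.sqrt a) + (2 / Real.sqrt n) * ((n - a : ℕ) : ℝ) ^ γ) :=
        Finset.sum_le_sum key
    _ = 2 * (n:ℝ)^γ * (∑ a ∈ Finset.Icc 1 (n-1), 1 / Real.sqrt a)
        + (2 / Real.sqrt n) * ∑ a ∈ Finset.Icc 1 (n-1), ((n - a : ℕ) : ℝ) ^ γ := by
        rw [Finset.sum_add_distrib, Finset.mul_sum, Finset.mul_sum]
    _ ≤ 2 * (n:ℝ)^γ * (2 * Real.sqrt n) + (2 / Real.sqrt n) * (2 * (n:ℝ)^(γ+1)) := by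
        have h1 : 0 ≤ 2 * (n:ℝ)^γ := by positivity
        have h2 : 0 ≤ 2 / Real.sqrt n := by positivity
        gcongr
    _ = 4 * ((n:ℝ)^γ * Real.sqrt n) + 4 * ((n:ℝ)^(γ+1) / Real.sqrt n) := by ring
    _ = 8 * (n:ℝ) ^ (γ + 1/2) := by rw [e1, e2]; ring

lemma complexBeta_ofReal {s t : ℝ} (hs : 0 < s) (ht : 0 < t) :
    Complex.betaIntegral s t = ((Real.Gamma s * Real.Gamma t / Real.Gamma (s+t) : ℝ) : ℂ) := by
  have h := Complex.Gamma_mul_Gamma_eq_betaIntegral (s := (s:ℂ)) (t := (t:ℂ))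
    (by simpa using hs) (by simpa using ht)
  rw [show ((s:ℂ) + t) = ((s + t : ℝ) : ℂ) by push_cast; ring] at h
  rw [Complex.Gamma_ofReal, Complex.Gamma_ofReal, Complex.Gamma_ofReal] at h
  have hne : ((Real.Gamma (s+t) : ℝ) : ℂ) ≠ 0 := by
    exact_mod_cast (Real.Gamma_pos_of_pos (by linarith)).ne'
  rw [Complex.ofReal_div, eq_div_iff hne, mul_comm, ← h, Complex.ofReal_mul]
lemma realBetaScaled {s t : ℝ} (hs : 0 < s) (ht : 0 < t) {a : ℝ} (ha : 0 < a) :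
    ∫ x in (0:ℝ)..a, x ^ (s-1) * (a-x) ^ (t-1)
      = a ^ (s+t-1) * (Real.Gamma s * Real.Gamma t / Real.Gamma (s+t)) := by
  have hsc := Complex.betaIntegral_scaled (s:ℂ) (t:ℂ) ha
  rw [complexBeta_ofReal hs ht] at hsc
  have hL : (∫ x in (0:ℝ)..a, ((x:ℂ) ^ ((s:ℂ)-1) * (((a:ℝ):ℂ) - x) ^ ((t:ℂ)-1)))
      = ((∫ x in (0:ℝ)..a, x ^ (s-1) * (a-x) ^ (t-1) : ℝ) : ℂ) := by
    rw [← intervalIntegral.integral_ofReal]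
    apply intervalIntegral.integral_congr
    intro x hx
    rw [Set.uIcc_of_le ha.le] at hx
    obtain ⟨hx0, hx1⟩ := hx
    have e1 : ((x:ℝ):ℂ) ^ ((s:ℂ)-1) = ((x ^ (s-1) : ℝ) : ℂ) := by
      rw [show ((s:ℂ)-1) = ((s-1 : ℝ) : ℂ) by push_cast; ring, Complex.ofReal_cpow hx0]
    have e2 : (((a:ℝ):ℂ) - x) ^ ((t:ℂ)-1) = (((a - x) ^ (t-1) : ℝ) : ℂ) := by
      rw [show (((a:ℝ):ℂ) - (x:ℝ)) = (((a - x : ℝ)) : ℂ) by push_cast; ring,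
        show ((t:ℂ)-1) = ((t-1 : ℝ) : ℂ) by push_cast; ring,
        Complex.ofReal_cpow (by linarith)]
    simp only []
    rw [e1, e2, ← Complex.ofReal_mul]
  rw [hL] at hsc
  have hR : (((a:ℝ)):ℂ) ^ ((s:ℂ) + t - 1) = ((a ^ (s+t-1) : ℝ) : ℂ) := by
    rw [show ((s:ℂ) + t - 1) = ((s+t-1 : ℝ) : ℂ) by push_cast; ring, Complex.ofReal_cpow ha.le]
  rw [hR, ← Complex.ofReal_mul] at hsc
  exact_mod_cast hsc

lemma sumB {β : ℝ} (hβ : 0 ≤ β) (n : ℕ) (hn : 2 ≤ n) :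
    |(∑ a ∈ Finset.Icc 1 (n-1), (1 / Real.sqrt a) * ((n - a : ℕ) : ℝ) ^ β)
      - (n:ℝ)^(β + 1/2) * (Real.Gamma (1/2) * Real.Gamma (β+1) / Real.Gamma (β+3/2))|
      ≤ 4 * (n:ℝ)^β := by
  have hn0 : (0:ℝ) < n := by positivity
  have hn1 : (1:ℝ) ≤ (n:ℝ) - 1 := by
    have : (2:ℝ) ≤ n := by exact_mod_cast hn
    linarith
  set g : ℝ → ℝ := fun x => x ^ (-(1/2):ℝ) * ((n:ℝ) - x) ^ β with hg
  have hcastn1 : ((n-1 : ℕ) : ℝ) = (n:ℝ) - 1 := by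
    have : 1 ≤ n := by omega
    push_cast [this]; ring
  -- continuity of second factor
  have hcont : Continuous (fun x : ℝ => ((n:ℝ) - x) ^ β) :=
    (continuous_const.sub continuous_id).rpow_const (fun x => Or.inr hβ)
  -- integrability on [0, n]
  have hInt : IntervalIntegrable g volume 0 n :=
    (intervalIntegral.intervalIntegrable_rpow' (by norm_num)).mul_continuousOn
      hcont.continuousOn
  have hsub01 : Set.uIcc (0:ℝ) 1 ⊆ Set.uIcc (0:ℝ) n := by
    rw [Set.uIcc_of_le (by norm_num), Set.uIcc_of_le hn0.le]
    exact Set.Icc_subset_Icc le_rfl (by linarith)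
  have hsub1 : Set.uIcc (1:ℝ) ((n:ℝ)-1) ⊆ Set.uIcc (0:ℝ) n := by
    rw [Set.uIcc_of_le hn1, Set.uIcc_of_le hn0.le]
    exact Set.Icc_subset_Icc (by norm_num) (by linarith)
  have hsubn : Set.uIcc ((n:ℝ)-1) (n:ℝ) ⊆ Set.uIcc (0:ℝ) n := by
    rw [Set.uIcc_of_le (by linarith), Set.uIcc_of_le hn0.le]
    exact Set.Icc_subset_Icc (by linarith) le_rfl
  have hsub0n1 : Set.uIcc (0:ℝ) ((n:ℝ)-1) ⊆ Set.uIcc (0:ℝ) n := by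
    rw [Set.uIcc_of_le (by linarith), Set.uIcc_of_le hn0.le]
    exact Set.Icc_subset_Icc le_rfl (by linarith)
  have hInt01 := hInt.mono_set hsub01
  have hInt1 := hInt.mono_set hsub1
  have hIntn := hInt.mono_set hsubn
  have hInt0n1 := hInt.mono_set hsub0n1
  -- full integral value
  have hJ : ∫ x in (0:ℝ)..(n:ℝ), g x
      = (n:ℝ)^(β + 1/2) * (Real.Gamma (1/2) * Real.Gamma (β+1) / Real.Gamma (β+3/2)) := by
    have h := realBetaScaled (by norm_num : (0:ℝ) < 1/2) (by linarith : (0:ℝ) < β+1) hn0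
    simp only [show (1/2 - 1 : ℝ) = -(1/2) by norm_num, show (β+1-1 : ℝ) = β by ring,
      show (1/2 + (β+1) - 1 : ℝ) = β + 1/2 by ring, show (β + 3/2 - 1 : ℝ) = β + 1/2 by ring,
      show (1/2 + (β+1) : ℝ) = β + 3/2 by ring] at h
    exact h
  -- splitting
  have hsplit : (∫ x in (0:ℝ)..1, g x) + (∫ x in (1:ℝ)..((n:ℝ)-1), g x)
      + (∫ x in ((n:ℝ)-1)..(n:ℝ), g x) = ∫ x in (0:ℝ)..(n:ℝ), g x := by
    rw [intervalIntegral.integral_add_adjacent_intervals hInt01 hInt1,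
      intervalIntegral.integral_add_adjacent_intervals hInt0n1 hIntn]
  -- edge bounds
  have hedge0 : (0:ℝ) ≤ ∫ x in (0:ℝ)..1, g x := by
    apply intervalIntegral.integral_nonneg (by norm_num)
    intro u hu
    exact mul_nonneg (Real.rpow_nonneg hu.1 _) (Real.rpow_nonneg (by linarith [hu.2]) _)
  have hedge0' : (∫ x in (0:ℝ)..1, g x) ≤ 2 * (n:ℝ)^β := by
    have hmono : (∫ x in (0:ℝ)..1, g x) ≤ ∫ x in (0:ℝ)..1, (n:ℝ)^β * x ^ (-(1/2):ℝ) := by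
      apply intervalIntegral.integral_mono_on (by norm_num) hInt01
        ((intervalIntegral.intervalIntegrable_rpow' (by norm_num)).const_mul _)
      intro x hx
      have h1 : ((n:ℝ) - x) ^ β ≤ (n:ℝ)^β :=
        Real.rpow_le_rpow (by linarith [hx.2]) (by linarith [hx.1]) hβ
      have h2 : (0:ℝ) ≤ x ^ (-(1/2):ℝ) := Real.rpow_nonneg hx.1 _
      calc g x = x ^ (-(1/2):ℝ) * ((n:ℝ) - x) ^ β := rfl
        _ ≤ x ^ (-(1/2):ℝ) * (n:ℝ)^β := mul_le_mul_of_nonneg_left h1 h2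
        _ = (n:ℝ)^β * x ^ (-(1/2):ℝ) := by ring
    have hval : (∫ x in (0:ℝ)..1, (n:ℝ)^β * x ^ (-(1/2):ℝ)) = 2 * (n:ℝ)^β := by
      rw [intervalIntegral.integral_const_mul, integral_rpow (Or.inl (by norm_num)),
        Real.one_rpow, Real.zero_rpow (by norm_num : -(1/2:ℝ)+1 ≠ 0)]
      norm_num
      ring
    linarith
  have hedgen : (0:ℝ) ≤ ∫ x in ((n:ℝ)-1)..(n:ℝ), g x := by
    apply intervalIntegral.integral_nonneg (by linarith)
    intro u hu
    exact mul_nonneg (Real.rpow_nonneg (by linarith [hu.1]) _)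
      (Real.rpow_nonneg (by linarith [hu.2]) _)
  have hedgen' : (∫ x in ((n:ℝ)-1)..(n:ℝ), g x) ≤ (n:ℝ)^β := by
    have hmono : (∫ x in ((n:ℝ)-1)..(n:ℝ), g x) ≤ ∫ _x in ((n:ℝ)-1)..(n:ℝ), (1:ℝ) := by
      apply intervalIntegral.integral_mono_on (by linarith) hIntn intervalIntegrable_const
      intro x hx
      have h1 : x ^ (-(1/2):ℝ) ≤ 1 :=
        Real.rpow_le_one_of_one_le_of_nonpos (by linarith [hx.1]) (by norm_num)
      have h2 : ((n:ℝ) - x) ^ β ≤ 1 :=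
        Real.rpow_le_one (by linarith [hx.2]) (by linarith [hx.1]) hβ
      have h3 : (0:ℝ) ≤ x ^ (-(1/2):ℝ) := Real.rpow_nonneg (by linarith [hx.1]) _
      calc g x = x ^ (-(1/2):ℝ) * ((n:ℝ) - x) ^ β := rfl
        _ ≤ 1 := mul_le_one₀ h1 (Real.rpow_nonneg (by linarith [hx.2]) _) h2
    have hval : (∫ _x in ((n:ℝ)-1)..(n:ℝ), (1:ℝ)) = 1 := by
      simp
    have hone : (1:ℝ) ≤ (n:ℝ)^β := by
      calc (1:ℝ) = (n:ℝ)^(0:ℝ) := (Real.rpow_zero _).symm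
        _ ≤ (n:ℝ)^β := Real.rpow_le_rpow_of_exponent_le (by exact_mod_cast hn.trans' (by norm_num) : (1:ℝ) ≤ n) hβ
    linarith
  -- antitone on [1, n-1]
  have hAnti : AntitoneOn g (Set.Icc ((1:ℕ):ℝ) (((n-1:ℕ)):ℝ)) := by
    rw [Nat.cast_one, hcastn1]
    intro x hx y hy hxy
    have hx1 : (1:ℝ) ≤ x := hx.1
    have hy1 : (1:ℝ) ≤ y := hy.1
    have h1 : y ^ (-(1/2):ℝ) ≤ x ^ (-(1/2):ℝ) :=
      Real.rpow_le_rpow_of_nonpos (by linarith) hxy (by norm_num)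
    have h2 : ((n:ℝ) - y) ^ β ≤ ((n:ℝ) - x) ^ β :=
      Real.rpow_le_rpow (by linarith [hy.2]) (by linarith) hβ
    exact mul_le_mul h1 h2 (Real.rpow_nonneg (by linarith [hy.2]) _)
      (Real.rpow_nonneg (by linarith) _)
  -- sum identities
  have hterm : ∀ a ∈ Finset.Icc 1 (n-1), (1 / Real.sqrt a) * ((n - a : ℕ) : ℝ) ^ β = g a := by
    intro a ha
    simp only [Finset.mem_Icc] at ha
    have hcast : ((n - a : ℕ) : ℝ) = (n:ℝ) - (a:ℝ) := by
      have : a ≤ n := by omega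
      push_cast [this]; ring
    rw [one_div_sqrt_eq (Nat.cast_nonneg a), hcast]
  rw [Finset.sum_congr rfl hterm]
  -- upper bound
  have hub : ∑ a ∈ Finset.Icc 1 (n-1), g a ≤ g 1 + ∫ x in (1:ℝ)..((n:ℝ)-1), g x := by
    have hkey := hAnti.sum_le_integral_Ico (by omega : 1 ≤ n-1)
    rw [Nat.cast_one, hcastn1] at hkey
    have hre : ∑ i ∈ Finset.Ico 1 (n-1), g ((i+1 : ℕ):ℝ) = ∑ a ∈ Finset.Icc 2 (n-1), g a := by
      refine Finset.sum_bij' (fun i _ => i+1) (fun a _ => a-1) ?_ ?_ ?_ ?_ ?_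
      · intro i hi; simp only [Finset.mem_Ico] at hi; simp only [Finset.mem_Icc]; omega
      · intro a ha; simp only [Finset.mem_Icc] at ha; simp only [Finset.mem_Ico]; omega
      · intro i hi; simp only [Finset.mem_Ico] at hi; beta_reduce; omega
      · intro a ha; simp only [Finset.mem_Icc] at ha; beta_reduce; omega
      · intro i hi; rfl
    have hins : Finset.Icc 1 (n-1) = insert 1 (Finset.Icc 2 (n-1)) := by
      ext x; simp only [Finset.mem_Icc, Finset.mem_insert]; omega
    rw [hins, Finset.sum_insert (by simp)]
    rw [hre] at hkey
    have : g ((1:ℕ):ℝ) = g 1 := by norm_num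
    linarith [hkey]
  -- lower bound
  have hlb : (∫ x in (1:ℝ)..((n:ℝ)-1), g x) ≤ ∑ a ∈ Finset.Icc 1 (n-1), g a := by
    have hkey := hAnti.integral_le_sum_Ico (by omega : 1 ≤ n-1)
    rw [Nat.cast_one, hcastn1] at hkey
    have hmono : ∑ a ∈ Finset.Ico 1 (n-1), g a ≤ ∑ a ∈ Finset.Icc 1 (n-1), g a := by
      apply Finset.sum_le_sum_of_subset_of_nonneg
      · intro x hx; simp only [Finset.mem_Ico] at hx; simp only [Finset.mem_Icc]; omega
      · intro i hi _
        simp only [Finset.mem_Icc] at hi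
        have : (i:ℝ) ≤ (n:ℝ) := by exact_mod_cast (by omega : i ≤ n)
        exact mul_nonneg (Real.rpow_nonneg (by positivity) _)
          (Real.rpow_nonneg (by linarith) _)
    linarith [hkey]
  -- g 1 bound
  have hg1 : g 1 ≤ (n:ℝ)^β := by
    have : g 1 = ((n:ℝ) - 1) ^ β := by
      simp only [hg]
      rw [Real.one_rpow]
      ring
    rw [this]
    exact Real.rpow_le_rpow (by linarith) (by linarith) hβ
  have hg1' : 0 ≤ g 1 := mul_nonneg (Real.rpow_nonneg (by norm_num) _)
    (Real.rpow_nonneg (by linarith) _)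
  rw [abs_le]
  constructor
  · nlinarith [hedge0, hedge0', hedgen, hedgen', hsplit, hJ, hlb]
  · nlinarith [hedge0, hedge0', hedgen, hedgen', hsplit, hJ, hub, hg1, hg1']

section Base2

variable (n : ℕ)

noncomputable def g2 (n : ℕ) : ℝ → ℝ := fun x => x ^ (-(1/2):ℝ) * ((n:ℝ) - x) ^ (-(1/2):ℝ)

lemma g2_int_left (hn : 2 ≤ n) : IntervalIntegrable (g2 n) volume 0 ((n:ℝ)/2) := by
  have hn0 : (0:ℝ) < n := by positivity
  apply (intervalIntegral.intervalIntegrable_rpow' (by norm_num)).mul_continuousOn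
  apply ContinuousOn.rpow_const
  · exact (continuous_const.sub continuous_id).continuousOn
  · intro x hx
    rw [Set.uIcc_of_le (by positivity)] at hx
    left
    have := hx.2
    nlinarith [hx.1, hx.2]

lemma g2_int_right (hn : 2 ≤ n) : IntervalIntegrable (g2 n) volume ((n:ℝ)/2) n := by
  have hn0 : (0:ℝ) < n := by positivity
  have hbase : IntervalIntegrable (fun x : ℝ => x ^ (-(1/2):ℝ)) volume 0 ((n:ℝ)/2) :=
    intervalIntegral.intervalIntegrable_rpow' (by norm_num)
  have hcomp := hbase.comp_sub_left (n:ℝ)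
  rw [sub_zero, show (n:ℝ) - (n:ℝ)/2 = (n:ℝ)/2 by ring] at hcomp
  have hcomp' : IntervalIntegrable (fun x : ℝ => ((n:ℝ) - x) ^ (-(1/2):ℝ)) volume ((n:ℝ)/2) n :=
    hcomp.symm
  apply hcomp'.continuousOn_mul
  apply ContinuousOn.rpow_const continuousOn_id
  intro x hx
  rw [Set.uIcc_of_le (by linarith)] at hx
  left
  have h1 := hx.1
  simp only [id_eq]
  intro h
  rw [h] at h1
  nlinarith

lemma half_int (hn : 2 ≤ n) :
    ∫ x in (0:ℝ)..((n:ℝ)/2), g2 n x = Real.pi / 2 := by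
  have hn0 : (0:ℝ) < n := by positivity
  have hIa := g2_int_left n hn
  have hIb := g2_int_right n hn
  have hfull : ∫ x in (0:ℝ)..(n:ℝ), g2 n x = Real.pi := by
    have h := realBetaScaled (by norm_num : (0:ℝ) < 1/2) (by norm_num : (0:ℝ) < 1/2) hn0
    simp only [show (1/2 - 1 : ℝ) = -(1/2) by norm_num] at h
    have h2 : ∫ x in (0:ℝ)..(n:ℝ), g2 n x
        = ∫ x in (0:ℝ)..(n:ℝ), x ^ (-(1/2):ℝ) * ((n:ℝ) - x) ^ (-(1/2):ℝ) := rfl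
    rw [h2, h, show (1/2 + 1/2 - 1 : ℝ) = 0 by norm_num, show (1/2 + 1/2 : ℝ) = 1 by norm_num,
      Real.rpow_zero, Real.Gamma_one, Real.Gamma_one_half_eq, div_one, one_mul,
      Real.mul_self_sqrt Real.pi_pos.le]
  have hsym : ∫ x in ((n:ℝ)/2)..(n:ℝ), g2 n x = ∫ x in (0:ℝ)..((n:ℝ)/2), g2 n x := by
    have h1 : ∫ x in ((n:ℝ)/2)..(n:ℝ), g2 n x
        = ∫ x in ((n:ℝ)/2)..(n:ℝ), g2 n ((n:ℝ) - x) := by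
      apply intervalIntegral.integral_congr
      intro x _
      simp only [g2, sub_sub_cancel]
      ring
    rw [h1, intervalIntegral.integral_comp_sub_left (g2 n) (n:ℝ), sub_self,
      show (n:ℝ) - (n:ℝ)/2 = (n:ℝ)/2 by ring]
  have hadd := intervalIntegral.integral_add_adjacent_intervals hIa hIb
  rw [hsym, hfull] at hadd
  linarith

set_option maxHeartbeats 1000000 in
lemma halfsum (hn : 4 ≤ n) (p : ℕ) (hp1 : 1 ≤ p) (hp2 : (p:ℝ) ≤ (n:ℝ)/2)
    (hp3 : (n:ℝ)/2 - 1 ≤ (p:ℝ)) :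
    |(∑ a ∈ Finset.Icc 1 p, g2 n a) - Real.pi/2| ≤ 8 / Real.sqrt n := by
  have hn0 : (0:ℝ) < n := by positivity
  have hn4 : (4:ℝ) ≤ n := by exact_mod_cast hn
  have hsq : 0 < Real.sqrt n := Real.sqrt_pos.2 hn0
  have hIa := g2_int_left n (by omega)
  have hp2' : (1:ℝ) ≤ (p:ℝ) := by exact_mod_cast hp1
  -- integrability on subintervals
  have hsub01 : Set.uIcc (0:ℝ) 1 ⊆ Set.uIcc (0:ℝ) ((n:ℝ)/2) := by
    rw [Set.uIcc_of_le (by norm_num), Set.uIcc_of_le (by positivity)]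
    exact Set.Icc_subset_Icc le_rfl (by linarith)
  have hsub1p : Set.uIcc (1:ℝ) (p:ℝ) ⊆ Set.uIcc (0:ℝ) ((n:ℝ)/2) := by
    rw [Set.uIcc_of_le hp2', Set.uIcc_of_le (by positivity)]
    exact Set.Icc_subset_Icc (by norm_num) hp2
  have hsubpn : Set.uIcc ((p:ℝ)) ((n:ℝ)/2) ⊆ Set.uIcc (0:ℝ) ((n:ℝ)/2) := by
    rw [Set.uIcc_of_le hp2, Set.uIcc_of_le (by positivity)]
    exact Set.Icc_subset_Icc (by positivity) le_rfl
  have hsub0p : Set.uIcc (0:ℝ) (p:ℝ) ⊆ Set.uIcc (0:ℝ) ((n:ℝ)/2) := by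
    rw [Set.uIcc_of_le (by positivity), Set.uIcc_of_le (by positivity)]
    exact Set.Icc_subset_Icc le_rfl hp2
  have hI01 := hIa.mono_set hsub01
  have hI1p := hIa.mono_set hsub1p
  have hIpn := hIa.mono_set hsubpn
  have hI0p := hIa.mono_set hsub0p
  -- antitone on [1, p]
  have hAnti : AntitoneOn (g2 n) (Set.Icc ((1:ℕ):ℝ) ((p:ℕ):ℝ)) := by
    rw [Nat.cast_one]
    intro x hx y hy hxy
    have hx1 : (1:ℝ) ≤ x := hx.1
    have hy1 : (1:ℝ) ≤ y := hy.1
    have hyn : y ≤ (n:ℝ)/2 := le_trans hy.2 hp2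
    have hxn : x ≤ (n:ℝ)/2 := le_trans hx.2 hp2
    have hgx : g2 n x = (x * ((n:ℝ) - x)) ^ (-(1/2):ℝ) :=
      (Real.mul_rpow (by linarith) (by linarith)).symm
    have hgy : g2 n y = (y * ((n:ℝ) - y)) ^ (-(1/2):ℝ) :=
      (Real.mul_rpow (by linarith) (by linarith)).symm
    rw [hgx, hgy]
    apply Real.rpow_le_rpow_of_nonpos (by nlinarith) (by nlinarith) (by norm_num)
  -- sum/integral comparisons
  have hub : ∑ a ∈ Finset.Icc 1 p, g2 n a ≤ g2 n 1 + ∫ x in (1:ℝ)..(p:ℝ), g2 n x := by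
    have hkey := hAnti.sum_le_integral_Ico hp1
    rw [Nat.cast_one] at hkey
    have hre : ∑ i ∈ Finset.Ico 1 p, g2 n ((i+1 : ℕ):ℝ) = ∑ a ∈ Finset.Icc 2 p, g2 n a := by
      refine Finset.sum_bij' (fun i _ => i+1) (fun a _ => a-1) ?_ ?_ ?_ ?_ ?_
      · intro i hi; simp only [Finset.mem_Ico] at hi; simp only [Finset.mem_Icc]; omega
      · intro a ha; simp only [Finset.mem_Icc] at ha; simp only [Finset.mem_Ico]; omega
      · intro i hi; simp only [Finset.mem_Ico] at hi; beta_reduce; omega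
      · intro a ha; simp only [Finset.mem_Icc] at ha; beta_reduce; omega
      · intro i hi; rfl
    rcases eq_or_lt_of_le hp1 with hp | hp
    · rw [← hp]
      simp only [Finset.Icc_self, Finset.sum_singleton, Nat.cast_one,
        intervalIntegral.integral_same]
      simp
    · have hins : Finset.Icc 1 p = insert 1 (Finset.Icc 2 p) := by
        ext x; simp only [Finset.mem_Icc, Finset.mem_insert]; omega
      rw [hins, Finset.sum_insert (by simp)]
      rw [hre] at hkey
      have h1 : g2 n ((1:ℕ):ℝ) = g2 n 1 := by norm_num
      linarith [hkey]
  have hlb : (∫ x in (1:ℝ)..(p:ℝ), g2 n x) ≤ ∑ a ∈ Finset.Icc 1 p, g2 n a := by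
    have hkey := hAnti.integral_le_sum_Ico hp1
    rw [Nat.cast_one] at hkey
    have hmono : ∑ a ∈ Finset.Ico 1 p, g2 n a ≤ ∑ a ∈ Finset.Icc 1 p, g2 n a := by
      apply Finset.sum_le_sum_of_subset_of_nonneg
      · intro x hx; simp only [Finset.mem_Ico] at hx; simp only [Finset.mem_Icc]; omega
      · intro i hi _
        simp only [Finset.mem_Icc] at hi
        have hi' : (i:ℝ) ≤ (n:ℝ)/2 := le_trans (by exact_mod_cast hi.2) hp2
        exact mul_nonneg (Real.rpow_nonneg (by positivity) _)
          (Real.rpow_nonneg (by linarith) _)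
    linarith [hkey]
  -- edge integrals
  have hsqrt2 : Real.sqrt 2 ≤ (3:ℝ)/2 := by
    nlinarith [Real.sq_sqrt (by norm_num : (0:ℝ) ≤ 2), Real.sqrt_nonneg 2]
  have hc : ((n:ℝ)/2) ^ (-(1/2):ℝ) ≤ (3/2) / Real.sqrt n := by
    have h1 : ((n:ℝ)/2) ^ (-(1/2):ℝ) = (n:ℝ) ^ (-(1/2):ℝ) * (2:ℝ) ^ ((1/2):ℝ) := by
      rw [Real.div_rpow hn0.le (by norm_num), Real.rpow_neg (by norm_num : (0:ℝ) ≤ 2)]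
      field_simp
    have h2 : (2:ℝ) ^ ((1/2):ℝ) = Real.sqrt 2 := (Real.sqrt_eq_rpow 2).symm
    have h3 : (n:ℝ) ^ (-(1/2):ℝ) = 1 / Real.sqrt n := (one_div_sqrt_eq hn0.le).symm
    rw [h1, h2, h3]
    rw [show 1 / Real.sqrt n * Real.sqrt 2 = Real.sqrt 2 / Real.sqrt n by ring]
    gcongr
  -- g2 n 1 bound
  have hg1pos : 0 ≤ g2 n 1 :=
    mul_nonneg (Real.rpow_nonneg (by norm_num) _) (Real.rpow_nonneg (by linarith) _)
  have hg1 : g2 n 1 ≤ 2 / Real.sqrt n := by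
    have e : g2 n 1 = ((n:ℝ) - 1) ^ (-(1/2):ℝ) := by
      simp only [g2, Real.one_rpow, one_mul]
    have h1 : ((n:ℝ) - 1) ^ (-(1/2):ℝ) ≤ ((n:ℝ)/2) ^ (-(1/2):ℝ) :=
      Real.rpow_le_rpow_of_nonpos (by linarith) (by linarith) (by norm_num)
    have := hc
    rw [e]
    calc ((n:ℝ) - 1) ^ (-(1/2):ℝ) ≤ ((n:ℝ)/2) ^ (-(1/2):ℝ) := h1
      _ ≤ (3/2) / Real.sqrt n := hc
      _ ≤ 2 / Real.sqrt n := by gcongr <;> norm_num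
  -- edge integral [0,1]
  have hedge0 : (0:ℝ) ≤ ∫ x in (0:ℝ)..1, g2 n x := by
    apply intervalIntegral.integral_nonneg (by norm_num)
    intro u hu
    exact mul_nonneg (Real.rpow_nonneg hu.1 _) (Real.rpow_nonneg (by linarith [hu.2]) _)
  have hedge0' : (∫ x in (0:ℝ)..1, g2 n x) ≤ 3 / Real.sqrt n := by
    have hmono : (∫ x in (0:ℝ)..1, g2 n x)
        ≤ ∫ x in (0:ℝ)..1, ((n:ℝ)/2) ^ (-(1/2):ℝ) * x ^ (-(1/2):ℝ) := by
      apply intervalIntegral.integral_mono_on (by norm_num) hI01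
        ((intervalIntegral.intervalIntegrable_rpow' (by norm_num)).const_mul _)
      intro x hx
      have h1 : ((n:ℝ) - x) ^ (-(1/2):ℝ) ≤ ((n:ℝ)/2) ^ (-(1/2):ℝ) :=
        Real.rpow_le_rpow_of_nonpos (by linarith) (by linarith [hx.2]) (by norm_num)
      have h2 : (0:ℝ) ≤ x ^ (-(1/2):ℝ) := Real.rpow_nonneg hx.1 _
      calc g2 n x = x ^ (-(1/2):ℝ) * ((n:ℝ) - x) ^ (-(1/2):ℝ) := rfl
        _ ≤ x ^ (-(1/2):ℝ) * ((n:ℝ)/2) ^ (-(1/2):ℝ) := mul_le_mul_of_nonneg_left h1 h2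
        _ = ((n:ℝ)/2) ^ (-(1/2):ℝ) * x ^ (-(1/2):ℝ) := by ring
    have hval : (∫ x in (0:ℝ)..1, ((n:ℝ)/2) ^ (-(1/2):ℝ) * x ^ (-(1/2):ℝ))
        = 2 * ((n:ℝ)/2) ^ (-(1/2):ℝ) := by
      rw [intervalIntegral.integral_const_mul, integral_rpow (Or.inl (by norm_num)),
        Real.one_rpow, Real.zero_rpow (by norm_num : -(1/2:ℝ)+1 ≠ 0)]
      norm_num
      ring
    have : 2 * ((n:ℝ)/2) ^ (-(1/2):ℝ) ≤ 2 * ((3/2) / Real.sqrt n) :=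
      mul_le_mul_of_nonneg_left hc (by norm_num)
    calc (∫ x in (0:ℝ)..1, g2 n x) ≤ 2 * ((n:ℝ)/2) ^ (-(1/2):ℝ) := by linarith [hmono, hval]
      _ ≤ 3 / Real.sqrt n := by
          rw [show 2 * ((3:ℝ)/2 / Real.sqrt n) = 3 / Real.sqrt n by ring] at this
          linarith
  -- edge integral [p, n/2]
  have hedgep : (0:ℝ) ≤ ∫ x in (p:ℝ)..((n:ℝ)/2), g2 n x := by
    apply intervalIntegral.integral_nonneg hp2
    intro u hu
    exact mul_nonneg (Real.rpow_nonneg (by linarith [hu.1]) _)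
      (Real.rpow_nonneg (by linarith [hu.2]) _)
  have hedgep' : (∫ x in (p:ℝ)..((n:ℝ)/2), g2 n x) ≤ 4 / Real.sqrt n := by
    set c2 : ℝ := ((n:ℝ)/4) ^ (-(1/2):ℝ) * ((n:ℝ)/4) ^ (-(1/2):ℝ) with hc2
    have hc2v : c2 = 4 / n := by
      rw [hc2, ← Real.rpow_add (by positivity), show (-(1/2) + -(1/2) : ℝ) = -1 by norm_num,
        Real.rpow_neg_one]
      field_simp
    have hn8 : (n:ℝ)/4 ≤ (p:ℝ) := by linarith
    have hmono : (∫ x in (p:ℝ)..((n:ℝ)/2), g2 n x) ≤ ∫ _x in (p:ℝ)..((n:ℝ)/2), c2 := by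
      apply intervalIntegral.integral_mono_on hp2 hIpn intervalIntegrable_const
      intro x hx
      have hx1 : (n:ℝ)/4 ≤ x := le_trans hn8 hx.1
      have h1 : x ^ (-(1/2):ℝ) ≤ ((n:ℝ)/4) ^ (-(1/2):ℝ) :=
        Real.rpow_le_rpow_of_nonpos (by positivity) hx1 (by norm_num)
      have h2 : ((n:ℝ) - x) ^ (-(1/2):ℝ) ≤ ((n:ℝ)/4) ^ (-(1/2):ℝ) :=
        Real.rpow_le_rpow_of_nonpos (by positivity) (by linarith [hx.2]) (by norm_num)
      calc g2 n x = x ^ (-(1/2):ℝ) * ((n:ℝ) - x) ^ (-(1/2):ℝ) := rfl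
        _ ≤ c2 := by
            rw [hc2]
            apply mul_le_mul h1 h2 (Real.rpow_nonneg (by linarith [hx.2]) _)
              (Real.rpow_nonneg (by positivity) _)
    have hval : (∫ _x in (p:ℝ)..((n:ℝ)/2), c2) = ((n:ℝ)/2 - p) * c2 := by
      rw [intervalIntegral.integral_const]
      simp [smul_eq_mul]
    have hc2pos : 0 ≤ c2 := by rw [hc2v]; positivity
    have hlen : (n:ℝ)/2 - p ≤ 1 := by linarith
    have hsn : Real.sqrt n ≤ (n:ℝ) := by
      nlinarith [Real.sq_sqrt hn0.le, Real.sqrt_nonneg (n:ℝ)]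
    calc (∫ x in (p:ℝ)..((n:ℝ)/2), g2 n x) ≤ ((n:ℝ)/2 - p) * c2 := by linarith [hmono, hval]
      _ ≤ 1 * c2 := mul_le_mul_of_nonneg_right hlen hc2pos
      _ = 4 / n := by rw [one_mul, hc2v]
      _ ≤ 4 / Real.sqrt n := by
          apply div_le_div_of_nonneg_left (by norm_num) hsq hsn
  -- splitting
  have hsplit : (∫ x in (0:ℝ)..1, g2 n x) + (∫ x in (1:ℝ)..(p:ℝ), g2 n x)
      + (∫ x in (p:ℝ)..((n:ℝ)/2), g2 n x) = Real.pi / 2 := by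
    rw [intervalIntegral.integral_add_adjacent_intervals hI01 hI1p,
      intervalIntegral.integral_add_adjacent_intervals hI0p hIpn]
    exact half_int n (by omega)
  have hxpos : (0:ℝ) ≤ 1 / Real.sqrt n := by positivity
  have h8 : (8:ℝ) / Real.sqrt n = 8 * (1 / Real.sqrt n) := by ring
  have h2' : (2:ℝ) / Real.sqrt n = 2 * (1 / Real.sqrt n) := by ring
  have h3' : (3:ℝ) / Real.sqrt n = 3 * (1 / Real.sqrt n) := by ring
  have h4' : (4:ℝ) / Real.sqrt n = 4 * (1 / Real.sqrt n) := by ring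
  rw [abs_le, h8]
  rw [h2'] at hg1
  rw [h3'] at hedge0'
  rw [h4'] at hedgep'
  constructor
  · linarith
  · linarith


lemma base2' (hn : 4 ≤ n) :
    |(∑ a ∈ Finset.Icc 1 (n-1), (1 / Real.sqrt a) * (1 / Real.sqrt ((n-a : ℕ):ℝ)))
      - Real.pi| ≤ 16 / Real.sqrt n := by
  have hn0 : (0:ℝ) < n := by positivity
  set h : ℕ := n/2 with hh
  set q : ℕ := n - 1 - h with hq
  -- convert terms to g2
  have hterm : ∀ a ∈ Finset.Icc 1 (n-1),
      (1 / Real.sqrt a) * (1 / Real.sqrt ((n-a : ℕ):ℝ)) = g2 n a := by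
    intro a ha
    simp only [Finset.mem_Icc] at ha
    have hcast : ((n - a : ℕ) : ℝ) = (n:ℝ) - (a:ℝ) := by
      have : a ≤ n := by omega
      push_cast [this]; ring
    rw [one_div_sqrt_eq (Nat.cast_nonneg a), hcast, one_div_sqrt_eq (by linarith [hcast ▸ Nat.cast_nonneg (n-a)] : (0:ℝ) ≤ (n:ℝ) - a)]
    rfl
  rw [Finset.sum_congr rfl hterm]
  -- split the sum
  have hsplit : Finset.Icc 1 (n-1) = Finset.Icc 1 h ∪ Finset.Icc (h+1) (n-1) := by
    ext x; simp only [Finset.mem_Icc, Finset.mem_union]; omega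
  have hdisj : Disjoint (Finset.Icc 1 h) (Finset.Icc (h+1) (n-1)) := by
    rw [Finset.disjoint_left]
    intro x hx1 hx2
    simp only [Finset.mem_Icc] at hx1 hx2
    omega
  rw [hsplit, Finset.sum_union hdisj]
  -- reflect the second piece
  have hrefl := sum_reflect' n 1 q (by omega) (by omega) (fun k => g2 n (k:ℝ))
  have hnq : n - q = h + 1 := by omega
  have hnp : n - 1 = n - 1 := rfl
  rw [hnq] at hrefl
  have hsym : ∀ a ∈ Finset.Icc 1 q, g2 n ((n - a : ℕ):ℝ) = g2 n (a:ℝ) := by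
    intro a ha
    simp only [Finset.mem_Icc] at ha
    have hcast : ((n - a : ℕ) : ℝ) = (n:ℝ) - (a:ℝ) := by
      have : a ≤ n := by omega
      push_cast [this]; ring
    rw [hcast]
    simp only [g2, sub_sub_cancel]
    ring
  have hsecond : ∑ a ∈ Finset.Icc (h+1) (n-1), g2 n (a:ℝ) = ∑ a ∈ Finset.Icc 1 q, g2 n (a:ℝ) := by
    rw [← hrefl, Finset.sum_congr rfl hsym]
  rw [hsecond]
  -- apply halfsum to both pieces
  have hsum1 := halfsum n hn h (by omega)
    (by
      have : 2 * h ≤ n := by omega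
      have : ((2 * h : ℕ):ℝ) ≤ (n:ℝ) := by exact_mod_cast this
      push_cast at this
      linarith)
    (by
      have : n ≤ 2 * h + 1 := by omega
      have : ((n:ℕ):ℝ) ≤ ((2 * h + 1 : ℕ):ℝ) := by exact_mod_cast this
      push_cast at this
      linarith)
  have hsum2 := halfsum n hn q (by omega)
    (by
      have : 2 * q ≤ n := by omega
      have : ((2 * q : ℕ):ℝ) ≤ (n:ℝ) := by exact_mod_cast this
      push_cast at this
      linarith)
    (by
      have : n ≤ 2 * q + 2 := by omega
      have : ((n:ℕ):ℝ) ≤ ((2 * q + 2 : ℕ):ℝ) := by exact_mod_cast this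
      push_cast at this
      linarith)
  have habs := abs_add_le ((∑ a ∈ Finset.Icc 1 h, g2 n (a:ℝ)) - Real.pi/2)
    ((∑ a ∈ Finset.Icc 1 q, g2 n (a:ℝ)) - Real.pi/2)
  have e : ((∑ a ∈ Finset.Icc 1 h, g2 n (a:ℝ)) - Real.pi/2)
      + ((∑ a ∈ Finset.Icc 1 q, g2 n (a:ℝ)) - Real.pi/2)
      = (∑ a ∈ Finset.Icc 1 h, g2 n (a:ℝ)) + (∑ a ∈ Finset.Icc 1 q, g2 n (a:ℝ)) - Real.pi := by
    ring
  rw [e] at habs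
  have : (16:ℝ) / Real.sqrt n = 8 / Real.sqrt n + 8 / Real.sqrt n := by ring
  rw [this]
  exact le_trans habs (add_le_add hsum1 hsum2)

lemma S2_eq (hn : 1 ≤ n) : S 2 n
    = ∑ a ∈ Finset.Icc 1 (n-1), (1 / Real.sqrt a) * (1 / Real.sqrt ((n-a : ℕ):ℝ)) := by
  rw [show (2:ℕ) = 1 + 1 by rfl, S_succ 1 n le_rfl]
  apply Finset.sum_congr rfl
  intro a ha
  simp only [Finset.mem_Icc] at ha
  rw [S_one (by omega : 1 ≤ n - a)]

lemma base2 (hn : 1 ≤ n) : |S 2 n - Real.pi| ≤ 20 / Real.sqrt n := by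
  have hn0 : (0:ℝ) < n := by positivity
  have hsq : 0 < Real.sqrt n := Real.sqrt_pos.2 hn0
  rw [S2_eq n hn]
  rcases le_or_gt 4 n with h4 | h4
  · have := base2' n h4
    have h16 : (16:ℝ) / Real.sqrt n ≤ 20 / Real.sqrt n := by gcongr <;> norm_num
    linarith
  · -- n ≤ 3 : crude bound
    set T := ∑ a ∈ Finset.Icc 1 (n-1), (1 / Real.sqrt a) * (1 / Real.sqrt ((n-a : ℕ):ℝ)) with hT
    have hTpos : 0 ≤ T := by
      apply Finset.sum_nonneg
      intro a _
      positivity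
    have hTle : T ≤ 2 := by
      have hcard : ∀ a ∈ Finset.Icc 1 (n-1), (1 / Real.sqrt a) * (1 / Real.sqrt ((n-a : ℕ):ℝ)) ≤ 1 := by
        intro a ha
        simp only [Finset.mem_Icc] at ha
        have h1 : (1:ℝ) ≤ Real.sqrt a := by
          rw [show (1:ℝ) = Real.sqrt 1 by simp]
          exact Real.sqrt_le_sqrt (by exact_mod_cast ha.1)
        have h2 : (1:ℝ) ≤ Real.sqrt ((n-a : ℕ):ℝ) := by
          rw [show (1:ℝ) = Real.sqrt 1 by simp]
          apply Real.sqrt_le_sqrt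
          have : 1 ≤ n - a := by omega
          exact_mod_cast this
        have e1 : 1 / Real.sqrt a ≤ 1 := by
          rw [div_le_one (by linarith)]; linarith
        have e2 : 1 / Real.sqrt ((n-a : ℕ):ℝ) ≤ 1 := by
          rw [div_le_one (by linarith)]; linarith
        calc (1 / Real.sqrt a) * (1 / Real.sqrt ((n-a : ℕ):ℝ)) ≤ 1 * 1 :=
              mul_le_mul e1 e2 (by positivity) (by norm_num)
          _ = 1 := by norm_num
      calc T ≤ (Finset.Icc 1 (n-1)).card • (1:ℝ) := Finset.sum_le_card_nsmul _ _ 1 hcard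
        _ = ((n-1 : ℕ) : ℝ) := by simp [Nat.card_Icc]
        _ ≤ 2 := by
            have : n - 1 ≤ 2 := by omega
            exact_mod_cast this
    have hpi : Real.pi ≤ 4 := Real.pi_le_four
    have hsqle : Real.sqrt n ≤ 2 := by
      rw [show (2:ℝ) = Real.sqrt 4 by
        rw [show (4:ℝ) = 2^2 by norm_num, Real.sqrt_sq (by norm_num)]]
      apply Real.sqrt_le_sqrt
      have : n ≤ 4 := by omega
      exact_mod_cast this
    have h10 : (10:ℝ) ≤ 20 / Real.sqrt n := by
      rw [le_div_iff₀ hsq]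
      nlinarith
    rw [abs_le]
    constructor
    · nlinarith [Real.pi_pos]
    · nlinarith [Real.pi_pos]

end Base2

noncomputable def cGamma (m : ℕ) : ℝ := Real.Gamma (1/2) ^ m / Real.Gamma ((m:ℝ)/2)

lemma cG_pos (m : ℕ) (hm : 1 ≤ m) : 0 < cGamma m := by
  apply div_pos
  · exact pow_pos (Real.Gamma_pos_of_pos (by norm_num)) m
  · apply Real.Gamma_pos_of_pos
    have : (1:ℝ) ≤ m := by exact_mod_cast hm
    linarith

lemma cG_succ (m : ℕ) (hm : 1 ≤ m) :
    cGamma (m+1) = cGamma m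
      * (Real.Gamma (1/2) * Real.Gamma ((m:ℝ)/2) / Real.Gamma ((m:ℝ)/2 + 1/2)) := by
  have h1 : Real.Gamma ((m:ℝ)/2) ≠ 0 := by
    apply (Real.Gamma_pos_of_pos ?_).ne'
    have : (1:ℝ) ≤ m := by exact_mod_cast hm
    linarith
  have h2 : Real.Gamma ((m:ℝ)/2 + 1/2) ≠ 0 := by
    apply (Real.Gamma_pos_of_pos ?_).ne'
    have : (1:ℝ) ≤ m := by exact_mod_cast hm
    linarith
  have hcast : ((m+1:ℕ):ℝ)/2 = (m:ℝ)/2 + 1/2 := by push_cast; ring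
  rw [cGamma, cGamma, hcast, pow_succ]
  field_simp

lemma Sasymp (m : ℕ) (hm : 2 ≤ m) : ∃ C : ℝ, 0 < C ∧ ∀ n : ℕ, 1 ≤ n →
    |S m n - cGamma m * (n:ℝ) ^ ((m:ℝ)/2 - 1)| ≤ C * (n:ℝ) ^ ((m:ℝ)/2 - 3/2) := by
  induction m, hm using Nat.le_induction with
  | base =>
    refine ⟨20, by norm_num, ?_⟩
    intro n hn
    have hn0 : (0:ℝ) < n := by positivity
    have h := base2 n hn
    have hc2 : cGamma 2 = Real.pi := by
      rw [cGamma, show ((2:ℕ):ℝ)/2 = 1 by norm_num, Real.Gamma_one, div_one,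
        Real.Gamma_one_half_eq, Real.sq_sqrt Real.pi_pos.le]
    rw [show ((2:ℕ):ℝ)/2 - 1 = 0 by norm_num, show ((2:ℕ):ℝ)/2 - 3/2 = -(1/2) by norm_num,
      Real.rpow_zero, mul_one, hc2, ← one_div_sqrt_eq hn0.le,
      show (20:ℝ) * (1/Real.sqrt n) = 20 / Real.sqrt n by ring]
    exact h
  | succ m hm ih =>
    obtain ⟨C, hC, hIH⟩ := ih
    have hm1 : 1 ≤ m := by omega
    have hcm := cG_pos m hm1
    have hcm1 := cG_pos (m+1) (by omega)
    refine ⟨8*C + 4*cGamma m + cGamma (m+1), by positivity, ?_⟩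
    intro n hn
    rcases eq_or_lt_of_le hn with h1 | h2
    · -- n = 1
      rw [← h1]
      rw [S_succ m 1 hm1, show (1:ℕ) - 1 = 0 from rfl, Finset.Icc_eq_empty (by omega),
        Finset.sum_empty, Nat.cast_one, Real.one_rpow, Real.one_rpow, zero_sub, abs_neg,
        abs_of_pos (by positivity : (0:ℝ) < cGamma (m+1) * 1)]
      nlinarith
    · have hn2 : 2 ≤ n := h2
      have hn0 : (0:ℝ) < n := by positivity
      set β : ℝ := (m:ℝ)/2 - 1 with hβ
      have hβ0 : 0 ≤ β := by
        rw [hβ]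
        have : (2:ℝ) ≤ m := by exact_mod_cast hm
        linarith
      set Bv : ℝ := Real.Gamma (1/2) * Real.Gamma (β+1) / Real.Gamma (β+3/2) with hBv
      have hcc : cGamma (m+1) = cGamma m * Bv := by
        rw [cG_succ m hm1, hBv, show β+1 = (m:ℝ)/2 by rw [hβ]; ring,
          show β+3/2 = (m:ℝ)/2 + 1/2 by rw [hβ]; ring]
      set I := Finset.Icc 1 (n-1) with hI
      have h1 : (∑ a ∈ I, (1 / Real.sqrt a) * S m (n-a))
          - cGamma (m+1) * (n:ℝ) ^ (((m+1:ℕ):ℝ)/2 - 1)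
          = (∑ a ∈ I, (1 / Real.sqrt a) * (S m (n-a) - cGamma m * ((n-a:ℕ):ℝ)^β))
            + cGamma m * ((∑ a ∈ I, (1 / Real.sqrt a) * ((n-a:ℕ):ℝ)^β)
              - (n:ℝ)^(β+1/2) * Bv) := by
        have e1 : ∑ a ∈ I, (1 / Real.sqrt a) * (S m (n-a) - cGamma m * ((n-a:ℕ):ℝ)^β)
            = (∑ a ∈ I, (1 / Real.sqrt a) * S m (n-a))
              - cGamma m * ∑ a ∈ I, (1 / Real.sqrt a) * ((n-a:ℕ):ℝ)^β := by
          rw [Finset.mul_sum, ← Finset.sum_sub_distrib]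
          apply Finset.sum_congr rfl
          intros; ring
        have e2 : cGamma (m+1) * (n:ℝ) ^ (((m+1:ℕ):ℝ)/2 - 1)
            = cGamma m * ((n:ℝ)^(β+1/2) * Bv) := by
          rw [hcc, show ((m+1:ℕ):ℝ)/2 - 1 = β + 1/2 by rw [hβ]; push_cast; ring]
          ring
        rw [e1, e2]; ring
      have hT1 : |∑ a ∈ I, (1 / Real.sqrt a) * (S m (n-a) - cGamma m * ((n-a:ℕ):ℝ)^β)|
          ≤ 8 * C * (n:ℝ)^β := by
        calc |∑ a ∈ I, (1 / Real.sqrt a) * (S m (n-a) - cGamma m * ((n-a:ℕ):ℝ)^β)|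
            ≤ ∑ a ∈ I, |(1 / Real.sqrt a) * (S m (n-a) - cGamma m * ((n-a:ℕ):ℝ)^β)| :=
              Finset.abs_sum_le_sum_abs _ _
          _ ≤ ∑ a ∈ I, (1 / Real.sqrt a) * (C * ((n-a:ℕ):ℝ)^(β - 1/2)) := by
              apply Finset.sum_le_sum
              intro a ha
              rw [hI, Finset.mem_Icc] at ha
              have hna : 1 ≤ n - a := by omega
              have hIHa := hIH (n-a) hna
              rw [show (m:ℝ)/2 - 3/2 = β - 1/2 by rw [hβ]; ring] at hIHa
              rw [abs_mul, abs_of_nonneg (by positivity : (0:ℝ) ≤ 1 / Real.sqrt a)]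
              exact mul_le_mul_of_nonneg_left hIHa (by positivity)
          _ = C * ∑ a ∈ I, (1 / Real.sqrt a) * ((n-a:ℕ):ℝ)^(β - 1/2) := by
              rw [Finset.mul_sum]
              apply Finset.sum_congr rfl
              intros; ring
          _ ≤ C * (8 * (n:ℝ)^((β - 1/2) + 1/2)) := by
              apply mul_le_mul_of_nonneg_left ?_ hC.le
              refine conv_bound ?_ n (by omega)
              rw [hβ]
              have h2m : (2:ℝ) ≤ m := by exact_mod_cast hm
              linarith
          _ = 8 * C * (n:ℝ)^β := by rw [show β - 1/2 + 1/2 = β by ring]; ring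
      have hT2 := sumB hβ0 n hn2
      rw [← hBv] at hT2
      rw [S_succ m n hm1, ← hI]
      rw [show ((m+1:ℕ):ℝ)/2 - 3/2 = β by rw [hβ]; push_cast; ring]
      have hpow : (0:ℝ) ≤ (n:ℝ)^β := Real.rpow_nonneg hn0.le _
      calc |(∑ a ∈ I, (1 / Real.sqrt a) * S m (n-a))
            - cGamma (m+1) * (n:ℝ) ^ (((m+1:ℕ):ℝ)/2 - 1)|
          = |(∑ a ∈ I, (1 / Real.sqrt a) * (S m (n-a) - cGamma m * ((n-a:ℕ):ℝ)^β))
              + cGamma m * ((∑ a ∈ I, (1 / Real.sqrt a) * ((n-a:ℕ):ℝ)^β)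
                - (n:ℝ)^(β+1/2) * Bv)| := by rw [h1]
        _ ≤ |∑ a ∈ I, (1 / Real.sqrt a) * (S m (n-a) - cGamma m * ((n-a:ℕ):ℝ)^β)|
              + |cGamma m * ((∑ a ∈ I, (1 / Real.sqrt a) * ((n-a:ℕ):ℝ)^β)
                - (n:ℝ)^(β+1/2) * Bv)| := abs_add_le _ _
        _ ≤ 8 * C * (n:ℝ)^β + cGamma m * (4 * (n:ℝ)^β) := by
            apply add_le_add hT1
            rw [abs_mul, abs_of_pos hcm]
            exact mul_le_mul_of_nonneg_left hT2 hcm.le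
        _ ≤ (8*C + 4*cGamma m + cGamma (m+1)) * (n:ℝ)^β := by nlinarith
end CompAsymp

open Finset

/-- For fixed `m ≥ 2`, the sum over positive compositions of `n` into `m` parts of
`1/√(k₁⋯k_m)` equals `n^(m/2-1) Γ(1/2)^m/Γ(m/2) (1 + O(1/√n))`. -/
theorem composition_sum_asymptotics (m : ℕ) (hm : 2 ≤ m) :
    ∃ C : ℝ, 0 < C ∧ ∀ n : ℕ, 1 ≤ n →
      |(∑ k ∈ (Finset.Nat.antidiagonalTuple m n).filter (fun k => ∀ i, 1 ≤ k i),
          1 / Real.sqrt (∏ i, (k i : ℝ))) -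
        (n : ℝ) ^ ((m : ℝ) / 2 - 1) * (Real.Gamma (1/2) ^ m / Real.Gamma ((m : ℝ) / 2))| ≤
      (n : ℝ) ^ ((m : ℝ) / 2 - 1) * (Real.Gamma (1/2) ^ m / Real.Gamma ((m : ℝ) / 2)) *
        (C / Real.sqrt (n : ℝ)) := by
  obtain ⟨C, hC, hbound⟩ := CompAsymp.Sasymp m hm
  have hc := CompAsymp.cG_pos m (by omega)
  refine ⟨C / CompAsymp.cGamma m, div_pos hC hc, ?_⟩
  intro n hn
  have h := hbound n hn
  have hn0 : (0:ℝ) < n := by positivity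
  have hsq : (0:ℝ) < Real.sqrt n := Real.sqrt_pos.2 hn0
  have hrw : (n:ℝ) ^ ((m:ℝ)/2 - 3/2) = (n:ℝ) ^ ((m:ℝ)/2 - 1) / Real.sqrt n := by
    rw [show (m:ℝ)/2 - 3/2 = ((m:ℝ)/2 - 1) - 1/2 by ring, Real.rpow_sub hn0,
      Real.sqrt_eq_rpow]
  have hgoalrw : (n:ℝ) ^ ((m:ℝ)/2 - 1) * (Real.Gamma (1/2) ^ m / Real.Gamma ((m:ℝ)/2))
      = CompAsymp.cGamma m * (n:ℝ) ^ ((m:ℝ)/2 - 1) := by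
    rw [CompAsymp.cGamma]; ring
  rw [show (∑ k ∈ (Finset.Nat.antidiagonalTuple m n).filter (fun k => ∀ i, 1 ≤ k i),
      1 / Real.sqrt (∏ i, (k i : ℝ))) = CompAsymp.S m n from rfl, hgoalrw]
  calc |CompAsymp.S m n - CompAsymp.cGamma m * (n:ℝ) ^ ((m:ℝ)/2 - 1)|
      ≤ C * (n:ℝ) ^ ((m:ℝ)/2 - 3/2) := h
    _ = CompAsymp.cGamma m * (n:ℝ) ^ ((m:ℝ)/2 - 1)
        * ((C / CompAsymp.cGamma m) / Real.sqrt n) := by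
        rw [hrw]
        field_simp
end

section
/- For fixed m ≥ 2, Σ_{k₁+⋯+k_m = n, k_i ≥ 1} 1/(√(k₁⋯k_m) · (k₁+1)) = O(n^{m/2 − 3/2}). -/
open Finset

/-! Put the weight `x^(-3/2)` on the first part and `x^(-1/2)` on the others; the summand is at
most the product of the weights of the parts. For a composition `k` of `n` write `n = ∑ⱼ kⱼ`; for
an antitone weight `φ`, `kⱼ φ(kⱼ) ≤ ∑_{y ≤ kⱼ} φ(y)`, and since a composition is determined by all
of its parts but one, the pairs `(k, y)` embed into `[1, n]^m` by replacing `kⱼ` with `y`. Hence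
`n · ∑ₖ ∏ᵢ φᵢ(kᵢ) ≤ m ∏ᵢ ∑_{x ≤ n} φᵢ(x) ≤ 3m (2√n)^(m-1)`. -/

theorem sum_Icc_inv_sqrt_le (n : ℕ) : ∑ x ∈ Icc 1 n, (√x)⁻¹ ≤ 2 * √n := by
  induction n with
  | zero => simp
  | succ n ih =>
    rw [sum_Icc_succ_top (by omega)]
    set a := √(n : ℝ)
    set b := √((n + 1 : ℕ) : ℝ)
    have ha : a ^ 2 = n := Real.sq_sqrt (Nat.cast_nonneg n)
    have hb : b ^ 2 = n + 1 := by rw [Real.sq_sqrt (Nat.cast_nonneg _)]; push_cast; rfl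
    have hb₀ : 0 < b := Real.sqrt_pos.2 (by positivity)
    have : b⁻¹ ≤ 2 * b - 2 * a := by
      rw [inv_le_iff_one_le_mul₀' hb₀]
      nlinarith [sq_nonneg (a - b)]
    linarith

theorem sum_Icc_inv_sqrt_mul_inv_le (n : ℕ) :
    ∑ x ∈ Icc 1 n, (√x)⁻¹ * (x : ℝ)⁻¹ ≤ 3 := by
  -- telescoping `x^(-3/2) ≤ 2 (x-1)^(-1/2) - 2 x^(-1/2)`; at `n = 0` the junk `(√0)⁻¹ = 0` fits
  suffices h : ∑ x ∈ Icc 1 n, (√x)⁻¹ * (x : ℝ)⁻¹ ≤ 3 - 2 * (√n)⁻¹ by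
    linarith [show 0 ≤ (√(n : ℝ))⁻¹ by positivity]
  induction n with
  | zero => simp
  | succ n ih =>
    rw [sum_Icc_succ_top (by omega)]
    rcases Nat.eq_zero_or_pos n with rfl | hn
    · norm_num
    set a := √(n : ℝ)
    set b := √((n + 1 : ℕ) : ℝ)
    have ha : a ^ 2 = n := Real.sq_sqrt (Nat.cast_nonneg n)
    have hb : b ^ 2 = (n + 1 : ℕ) := Real.sq_sqrt (Nat.cast_nonneg _)
    have ha₀ : 0 < a := Real.sqrt_pos.2 (by exact_mod_cast hn)
    have hab : a ≤ b := Real.sqrt_le_sqrt (by simp)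
    have : b⁻¹ * ((n + 1 : ℕ) : ℝ)⁻¹ ≤ 2 * a⁻¹ - 2 * b⁻¹ := by
      rw [← hb]
      have hb₀ : 0 < b := ha₀.trans_le hab
      field_simp
      push_cast at hb
      nlinarith [mul_le_mul hab hab ha₀.le hb₀.le]
    linarith

theorem mul_le_sum_Icc_of_antitoneOn {φ : ℕ → ℝ} (hφ : AntitoneOn φ (Set.Ici 1)) (x : ℕ) :
    x * φ x ≤ ∑ y ∈ Icc 1 x, φ y := by
  have h := card_nsmul_le_sum (Icc 1 x) φ (φ x) fun y hy => by
    obtain ⟨h1, h2⟩ := mem_Icc.1 hy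
    exact hφ (Set.mem_Ici.2 h1) (Set.mem_Ici.2 (h1.trans h2)) h2
  simpa using h

section

variable {ι : Type*} [Fintype ι] [DecidableEq ι]

theorem eq_of_update_eq_of_sum_eq {k k' : ι → ℕ} {j : ι} {y y' : ℕ}
    (hs : ∑ i, k i = ∑ i, k' i) (h : Function.update k j y = Function.update k' j y') :
    k = k' ∧ y = y' := by
  have hy : y = y' := by simpa using congrFun h j
  have hne : ∀ i ≠ j, k i = k' i := fun i hi => by
    simpa [Function.update_of_ne hi] using congrFun h i
  have hsd : ∑ i ∈ univ \ {j}, k i = ∑ i ∈ univ \ {j}, k' i :=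
    sum_congr rfl fun i hi => hne i (by simpa using hi)
  rw [sum_eq_add_sum_sdiff_singleton_of_mem (mem_univ j),
    sum_eq_add_sum_sdiff_singleton_of_mem (mem_univ j), hsd] at hs
  refine ⟨funext fun i => ?_, hy⟩
  by_cases hi : i = j
  · subst hi; omega
  · exact hne i hi

variable {A : Finset (ι → ℕ)} {n : ℕ} {φ : ι → ℕ → ℝ}

theorem sum_mul_prod_le_prod_sum (hsum : ∀ k ∈ A, ∑ i, k i = n)
    (hpos : ∀ k ∈ A, ∀ i, 1 ≤ k i)
    (hφ₀ : ∀ i x, 0 ≤ φ i x) (hφ : ∀ i, AntitoneOn (φ i) (Set.Ici 1)) (j : ι) :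
    ∑ k ∈ A, (k j : ℝ) * ∏ i, φ i (k i) ≤ ∏ i, ∑ x ∈ Icc 1 n, φ i x := by
  have hupd : ∀ (k : ι → ℕ) y,
      ∏ i, φ i (Function.update k j y i) = φ j y * ∏ i ∈ univ \ {j}, φ i (k i) := by
    intro k y
    simp_rw [Function.apply_update φ k j y]
    exact prod_update_of_mem (mem_univ j) _ _
  have hpt : ∀ k ∈ A, (k j : ℝ) * ∏ i, φ i (k i) ≤
      ∑ y ∈ Icc 1 (k j), ∏ i, φ i (Function.update k j y i) := by
    intro k _
    simp_rw [hupd, ← sum_mul, prod_eq_mul_prod_sdiff_singleton_of_mem (mem_univ j),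
      ← mul_assoc]
    exact mul_le_mul_of_nonneg_right (mul_le_sum_Icc_of_antitoneOn (hφ j) _)
      (prod_nonneg fun i _ => hφ₀ _ _)
  set P := A.sigma fun k => Icc 1 (k j)
  have hinj : Set.InjOn (fun p : (_ : ι → ℕ) × ℕ => Function.update p.1 j p.2) P := by
    rintro ⟨k, y⟩ hp ⟨k', y'⟩ hp' h
    simp only [P, coe_sigma, Set.mem_sigma_iff, mem_coe] at hp hp'
    obtain ⟨rfl, rfl⟩ := eq_of_update_eq_of_sum_eq ((hsum k hp.1).trans (hsum k' hp'.1).symm) h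
    rfl
  have hmaps :
      P.image (fun p => Function.update p.1 j p.2) ⊆ Fintype.piFinset fun _ => Icc 1 n := by
    simp only [P, subset_iff, mem_image, mem_sigma, Fintype.mem_piFinset]
    rintro _ ⟨⟨k, y⟩, ⟨hk, hy⟩, rfl⟩ i
    have hkj : k j ≤ n := hsum k hk ▸ single_le_sum (fun _ _ => Nat.zero_le _) (mem_univ j)
    by_cases hi : i = j
    · subst hi
      simp only [Function.update_self, mem_Icc] at hy ⊢
      omega
    · rw [Function.update_of_ne hi, mem_Icc]
      exact ⟨hpos k hk i, hsum k hk ▸ single_le_sum (fun _ _ => Nat.zero_le _) (mem_univ i)⟩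
  calc ∑ k ∈ A, (k j : ℝ) * ∏ i, φ i (k i)
      ≤ ∑ k ∈ A, ∑ y ∈ Icc 1 (k j), ∏ i, φ i (Function.update k j y i) := sum_le_sum hpt
    _ = ∑ v ∈ P.image (fun p => Function.update p.1 j p.2), ∏ i, φ i (v i) := by
      rw [sum_image hinj, sum_sigma]
    _ ≤ ∑ v ∈ Fintype.piFinset fun _ => Icc 1 n, ∏ i, φ i (v i) :=
      sum_le_sum_of_subset_of_nonneg hmaps fun v _ _ => prod_nonneg fun i _ => hφ₀ _ _
    _ = ∏ i, ∑ x ∈ Icc 1 n, φ i x := (prod_univ_sum _ _).symm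

theorem mul_sum_prod_le_card_mul_prod_sum (hsum : ∀ k ∈ A, ∑ i, k i = n)
    (hpos : ∀ k ∈ A, ∀ i, 1 ≤ k i) (hφ₀ : ∀ i x, 0 ≤ φ i x)
    (hφ : ∀ i, AntitoneOn (φ i) (Set.Ici 1)) :
    n * ∑ k ∈ A, ∏ i, φ i (k i) ≤ Fintype.card ι * ∏ i, ∑ x ∈ Icc 1 n, φ i x :=
  calc (n : ℝ) * ∑ k ∈ A, ∏ i, φ i (k i)
      = ∑ j, ∑ k ∈ A, (k j : ℝ) * ∏ i, φ i (k i) := by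
        rw [mul_sum, sum_comm]
        refine sum_congr rfl fun k hk => ?_
        rw [← sum_mul, ← hsum k hk, Nat.cast_sum]
    _ ≤ ∑ _j : ι, ∏ i, ∑ x ∈ Icc 1 n, φ i x :=
        sum_le_sum fun j _ => sum_mul_prod_le_prod_sum hsum hpos hφ₀ hφ j
    _ = Fintype.card ι * ∏ i, ∑ x ∈ Icc 1 n, φ i x := by
        rw [sum_const, card_univ, nsmul_eq_mul]

end

section

variable {ι : Type*} [DecidableEq ι]

noncomputable def correctionWeight (z i : ι) (x : ℕ) : ℝ :=
  (√x)⁻¹ * if i = z then (x : ℝ)⁻¹ else 1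

theorem correctionWeight_nonneg (z i : ι) (x : ℕ) : 0 ≤ correctionWeight z i x := by
  unfold correctionWeight; split_ifs <;> positivity

theorem antitoneOn_correctionWeight (z i : ι) :
    AntitoneOn (correctionWeight z i) (Set.Ici 1) := by
  intro x (hx : 1 ≤ x) y _ hxy
  have hx₀ : (0 : ℝ) < x := by exact_mod_cast hx
  have hxy' : (x : ℝ) ≤ y := by exact_mod_cast hxy
  unfold correctionWeight
  split_ifs <;> gcongr

theorem one_div_sqrt_prod_mul_le_prod_correctionWeight [Fintype ι] {z : ι} {k : ι → ℕ}
    (hz : 0 < k z) :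
    1 / (√(∏ i, (k i : ℝ)) * ((k z : ℝ) + 1)) ≤ ∏ i, correctionWeight z i (k i) := by
  simp only [correctionWeight, prod_mul_distrib, Fintype.prod_ite_eq', prod_inv_distrib,
    ← Real.sqrt_prod _ fun i _ => Nat.cast_nonneg (k i)]
  have : (0 : ℝ) < k z := by exact_mod_cast hz
  rw [one_div, mul_inv]
  gcongr
  linarith

theorem prod_sum_correctionWeight_le [Fintype ι] (z : ι) (n : ℕ) :
    ∏ i, ∑ x ∈ Icc 1 n, correctionWeight z i x ≤ 3 * (2 * √n) ^ (Fintype.card ι - 1) := by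
  rw [← mul_prod_erase _ _ (mem_univ z), ← card_univ, ← card_erase_of_mem (mem_univ z)]
  have hsum₀ : ∀ i, 0 ≤ ∑ x ∈ Icc 1 n, correctionWeight z i x :=
    fun i => sum_nonneg fun x _ => correctionWeight_nonneg z i x
  refine mul_le_mul ?_
    ((prod_le_prod (fun i _ => hsum₀ i) fun i hi => ?_).trans_eq (prod_const _))
    (prod_nonneg fun i _ => hsum₀ i) (by norm_num)
  · simpa [correctionWeight] using sum_Icc_inv_sqrt_mul_inv_le n
  · simpa [correctionWeight, ne_of_mem_erase hi] using sum_Icc_inv_sqrt_le n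

end

theorem div_mul_sqrt_pow_eq_rpow {m : ℕ} (hm : 1 ≤ m) {x : ℝ} (hx : 0 < x) :
    m / x * (3 * (2 * √x) ^ (m - 1)) = 3 * m * 2 ^ (m - 1) * x ^ ((m : ℝ) / 2 - 3 / 2) := by
  rw [mul_pow, Real.sqrt_eq_rpow, ← Real.rpow_natCast (x ^ (1 / 2 : ℝ)) (m - 1),
    ← Real.rpow_mul hx.le, Nat.cast_sub hm,
    show (m : ℝ) / 2 - 3 / 2 = 1 / 2 * ((m : ℝ) - 1) - 1 by ring, Real.rpow_sub_one hx.ne']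
  push_cast
  ring

/-- For fixed `m ≥ 2`, the correction sum over positive compositions of `n` into `m`
parts of `1/(√(k₁⋯k_m)(k₁+1))` is `O(n^(m/2 - 3/2))`. -/
theorem composition_correction_sum (m : ℕ) (hm : 2 ≤ m) :
    ∃ C : ℝ, 0 < C ∧ ∀ n : ℕ, 1 ≤ n →
      (∑ k ∈ (Finset.Nat.antidiagonalTuple m n).filter (fun k => ∀ i, 1 ≤ k i),
          1 / (Real.sqrt (∏ i, (k i : ℝ)) * ((k ⟨0, by omega⟩ : ℝ) + 1))) ≤
        C * (n : ℝ) ^ ((m : ℝ) / 2 - 3/2) := by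
  refine ⟨3 * m * 2 ^ (m - 1), by positivity, fun n hn => ?_⟩
  set z : Fin m := ⟨0, by omega⟩
  set A := (Finset.Nat.antidiagonalTuple m n).filter (fun k => ∀ i, 1 ≤ k i)
  have hpos : ∀ k ∈ A, ∀ i, 1 ≤ k i := fun k hk => (mem_filter.1 hk).2
  have hn₀ : (0 : ℝ) < n := by exact_mod_cast hn
  have key := mul_sum_prod_le_card_mul_prod_sum
    (fun k hk => Finset.Nat.mem_antidiagonalTuple.1 (mem_filter.1 hk).1) hpos
    (correctionWeight_nonneg z) (antitoneOn_correctionWeight z)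
  rw [Fintype.card_fin] at key
  calc _ ≤ ∑ k ∈ A, ∏ i, correctionWeight z i (k i) :=
        sum_le_sum fun k hk => one_div_sqrt_prod_mul_le_prod_correctionWeight (hpos k hk z)
    _ ≤ m / n * (3 * (2 * √n) ^ (m - 1)) := by
        rw [div_mul_eq_mul_div, le_div_iff₀ hn₀, mul_comm]
        refine key.trans (mul_le_mul_of_nonneg_left ?_ (Nat.cast_nonneg m))
        simpa using prod_sum_correctionWeight_le z n
    _ = 3 * m * 2 ^ (m - 1) * (n : ℝ) ^ ((m : ℝ) / 2 - 3 / 2) :=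
        div_mul_sqrt_pow_eq_rpow (by omega) hn₀
end

section
/- The worst-case minimax redundancy over a class S equals the log Shtarkov sum: min over probability assignments Q of max over x^n of [log(sup_{P∈S} P(x^n)) − log Q(x^n)] = log Σ_{x^n} sup_{P∈S} P(x^n), attained by the normalized maximum likelihood distribution Q*(x^n) = sup_{P∈S} P(x^n) / Σ_{z^n} sup_{P∈S} P(z^n). -/
open Finset

/-- The worst-case minimax redundancy equals the log Shtarkov sum, attained by the
normalized maximum-likelihood (NML) distribution: for every probability assignment `Q`,
`max_x [log sup_{P∈S} P(x) − log Q(x)] ≥ log Σ_x sup_{P∈S} P(x)`, with equality for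
`Q*(x) = sup_{P∈S} P(x) / Σ_z sup_{P∈S} P(z)`. -/
theorem shtarkov_minimax
    {X : Type*} [Fintype X] [Nonempty X]
    (S : Set (X → ℝ)) (hne : S.Nonempty)
    (hprob : ∀ P ∈ S, (∀ x, 0 ≤ P x) ∧ ∑ x, P x = 1)
    (hbdd : ∀ x : X, BddAbove ((fun P => P x) '' S))
    (hpos : ∀ x : X, 0 < sSup ((fun P => P x) '' S)) :
    (∀ Q : X → ℝ, (∀ x, 0 < Q x) → ∑ x, Q x = 1 →
      (⨆ x : X, (Real.log (sSup ((fun P => P x) '' S)) - Real.log (Q x))) ≥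
        Real.log (∑ x, sSup ((fun P => P x) '' S))) ∧
    (⨆ x : X, (Real.log (sSup ((fun P => P x) '' S)) -
        Real.log (sSup ((fun P => P x) '' S) / ∑ z, sSup ((fun P => P z) '' S)))) =
      Real.log (∑ x, sSup ((fun P => P x) '' S)) := by
  set f : X → ℝ := fun x => sSup ((fun P => P x) '' S) with hf
  set T : ℝ := ∑ x, f x with hT
  have hTpos : 0 < T := Finset.sum_pos (fun x _ => hpos x) Finset.univ_nonempty
  constructor
  · intro Q hQpos hQsum
    -- there exists x with Q x * T ≤ f x
    have hsum : ∑ x, Q x * T ≤ ∑ x, f x := by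
      rw [← Finset.sum_mul, hQsum, one_mul]
    obtain ⟨x, -, hx⟩ := Finset.exists_le_of_sum_le Finset.univ_nonempty hsum
    have hle : T ≤ f x / Q x := (le_div_iff₀ (hQpos x)).2 (by linarith [hx])
    have hlog : Real.log T ≤ Real.log (f x) - Real.log (Q x) := by
      rw [← Real.log_div (hpos x).ne' (hQpos x).ne']
      exact Real.log_le_log hTpos hle
    exact hlog.trans (le_ciSup (f := fun x => Real.log (f x) - Real.log (Q x)) (Set.Finite.bddAbove (Set.finite_range _)) x)
  · have : ∀ x : X, Real.log (f x) - Real.log (f x / T) = Real.log T := by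
      intro x
      rw [Real.log_div (hpos x).ne' hTpos.ne']
      ring
    calc (⨆ x : X, (Real.log (f x) - Real.log (f x / T)))
        = ⨆ _ : X, Real.log T := by simp only [this]
      _ = Real.log T := ciSup_const
end
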